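/- The monoid FT¹(X) is a regular monoid generated by the idempotents {[g] : g ∈ G(X)}, and for every landscape u consisting of an uphill followed by a downhill, [reverse of u] is an inverse of [u] (that is, [u][rev u][u] = [u] and [rev u][u][rev u] = [rev u]). -/

import Mathlib

/-! Common definitions: the construction of `G(X)`, words, the congruence `ρ`,
the monoid `FT¹(X)`, landscapes, mountains, the maps `β₁, β₂, β`, Green's
relations, sandwich sets, etc. -/

/-- Nested triples over `X` together with the extra symbol `1`. -/
inductive PreG (X : Type) : Type where
  | one : PreG X
  | base : X → PreG X
  | node : PreG X → PreG X → PreG X → PreG X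

namespace PreG

variable {X : Type}

/-- The height `⋏(g)`. -/
def ht : PreG X → ℕ
  | one => 0
  | base _ => 1
  | node l _ _ => ht l + 1

/-- The left entry `g^l` (with `1^l = 1` and `x^l = 1` for `x ∈ X`). -/
def left : PreG X → PreG X
  | one => one
  | base _ => one
  | node l _ _ => l

/-- The right entry `g^r`. -/
def right : PreG X → PreG X
  | one => one
  | base _ => one
  | node _ _ r => r

/-- The central entry `g^c` (with `x^c = x` for `x ∈ X` via `x = (1,x,1)`). -/
def center : PreG X → PreG X
  | one => one
  | base x => base x
  | node _ c _ => c

/-- Membership in `G(X) = ⋃_{i≥0} G_i(X)`. -/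
inductive IsG : PreG X → Prop
  | one : IsG one
  | base (x : X) : IsG (base x)
  | node {l c r : PreG X} :
      IsG l → IsG c → IsG r →
      1 ≤ l.ht → l.ht = r.ht → c.ht + 1 = l.ht →
      l ≠ r →
      (c = l.left ∨ c = l.right) →
      (c = r.left ∨ c = r.right) →
      IsG (node l c r)

theorem IsG.left_isG {g : PreG X} (h : g.IsG) : g.left.IsG := by
  cases h with
  | one => exact .one
  | base x => exact .one
  | node hl hc hr h1 h2 h3 h4 h5 h6 => exact hl

theorem IsG.right_isG {g : PreG X} (h : g.IsG) : g.right.IsG := by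
  cases h with
  | one => exact .one
  | base x => exact .one
  | node hl hc hr h1 h2 h3 h4 h5 h6 => exact hr

theorem IsG.center_isG {g : PreG X} (h : g.IsG) : g.center.IsG := by
  cases h with
  | one => exact .one
  | base x => exact .base x
  | node hl hc hr h1 h2 h3 h4 h5 h6 => exact hc

/-- The ground `ε(g)`. -/
def ground : PreG X → Set (PreG X)
  | one => {one}
  | base x => {one, base x}
  | node l c r => ground l ∪ {node l c r} ∪ ground r

end PreG

/-- The set `G(X)`. -/
def Gx (X : Type) : Type := {g : PreG X // g.IsG}

namespace Gx

variable {X : Type}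

/-- The letter `1`. -/
def gone : Gx X := ⟨PreG.one, .one⟩

instance : Inhabited (Gx X) := ⟨gone⟩

/-- The letter corresponding to `x ∈ X`. -/
def ofX (x : X) : Gx X := ⟨PreG.base x, .base x⟩

/-- `g^l`. -/
def l (g : Gx X) : Gx X := ⟨g.1.left, g.2.left_isG⟩

/-- `g^c`. -/
def c (g : Gx X) : Gx X := ⟨g.1.center, g.2.center_isG⟩

/-- `g^r`. -/
def r (g : Gx X) : Gx X := ⟨g.1.right, g.2.right_isG⟩

/-- The height of `g`. -/
def ht (g : Gx X) : ℕ := g.1.ht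

theorem ht_c_lt : ∀ {g : Gx X}, 2 ≤ g.ht → g.c.ht < g.ht := by
  rintro ⟨g0, hg⟩ h
  cases hg with
  | one => simp [Gx.ht, PreG.ht] at h
  | base x => simp [Gx.ht, PreG.ht] at h
  | node hl hc hr hht hlr hc1 hne hcl hcr =>
    simp only [Gx.ht, Gx.c, PreG.center, PreG.ht] at *
    omega

/-- The step relation of an uphill: `a ∈ {b^l, b^r}` for consecutive letters `a b`. -/
def stepUp (a b : Gx X) : Prop := a = b.l ∨ a = b.r

/-- The step relation of a downhill: `b ∈ {a^l, a^r}` for consecutive letters `a b`. -/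
def stepDown (a b : Gx X) : Prop := b = a.l ∨ b = a.r

/-- The left hill `λ_l(g)` of the mountain `β₁(g)`. -/
def lamL (g : Gx X) : List (Gx X) :=
  if h : 2 ≤ g.ht then lamL g.c ++ [g.l, g]
  else if g.ht = 0 then [g] else [gone, g]
termination_by g.ht
decreasing_by exact ht_c_lt h

/-- The right hill `λ_r(g)` of the mountain `β₁(g)`. -/
def lamR (g : Gx X) : List (Gx X) :=
  if h : 2 ≤ g.ht then [g, g.r] ++ lamR g.c
  else if g.ht = 0 then [g] else [g, gone]
termination_by g.ht
decreasing_by exact ht_c_lt h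

end Gx

/-- The free semigroup `G(X)⁺` on `G(X)`. -/
abbrev Wd (X : Type) := FreeSemigroup (Gx X)

namespace Wd

variable {X : Type}

/-- The one-letter word. -/
def og (g : Gx X) : Wd X := FreeSemigroup.of g

/-- The list of letters of a word. -/
def toL (w : Wd X) : List (Gx X) := w.head :: w.tail

/-- The word with a given (nonempty) list of letters. -/
def ofL (w : List (Gx X)) : Wd X := ⟨w.headI, w.tail⟩

end Wd

/-- The generating relation `ρ_e ∪ ρ_s`. -/
def rhoBase (X : Type) : Wd X → Wd X → Prop := fun a b =>
  (∃ g : Gx X,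
     (a = Wd.og Gx.gone * Wd.og g ∧ b = Wd.og g) ∨
     (a = Wd.og g * Wd.og Gx.gone ∧ b = Wd.og g) ∨
     (a = Wd.og g * Wd.og g ∧ b = Wd.og g)) ∨
  (∃ g : Gx X, 2 ≤ g.ht ∧
     ((a = Wd.og g.c * Wd.og g.l * Wd.og g ∧ b = Wd.og g) ∨
      (a = Wd.og g * Wd.og g.r * Wd.og g.c ∧ b = Wd.og g) ∨
      (a = Wd.og g.r * Wd.og g.c * Wd.og g * Wd.og g.c * Wd.og g.l ∧
       b = Wd.og g.r * Wd.og g.c * Wd.og g.l)))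

/-- The congruence `ρ`: the smallest congruence containing `ρ_e ∪ ρ_s`. -/
def rho (X : Type) : Con (Wd X) := conGen (rhoBase X)

/-- The monoid `FT¹(X) = G(X)⁺/ρ`. -/
abbrev FT1 (X : Type) := (rho X).Quotient

/-- The `ρ`-class `[u]` of a word `u`. -/
def cls {X : Type} (u : Wd X) : FT1 X := (u : FT1 X)

/-- `FT(X) = FT¹(X) ∖ {[1]}`, as a subset of `FT¹(X)`. -/
def FTset (X : Type) : Set (FT1 X) := {a | a ≠ cls (Wd.og Gx.gone)}

section Landscapes

variable {X : Type}

/-- Landscapes (as nonempty lists of letters). -/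
def IsLandL (w : List (Gx X)) : Prop :=
  w ≠ [] ∧ w.Chain' (fun a b => Gx.stepUp a b ∨ Gx.stepDown a b)

/-- Uphills. -/
def IsUphillL (w : List (Gx X)) : Prop := w ≠ [] ∧ w.Chain' Gx.stepUp

/-- Downhills. -/
def IsDownhillL (w : List (Gx X)) : Prop := w ≠ [] ∧ w.Chain' Gx.stepDown

/-- No letter is a river. -/
def RiverFreeL : List (Gx X) → Prop
  | a :: b :: c :: t =>
      ¬(a.ht = b.ht + 1 ∧ c.ht = b.ht + 1) ∧ RiverFreeL (b :: c :: t)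
  | _ => True

/-- Mountains: landscapes with endpoints `1` and no rivers. -/
def IsMountainL (w : List (Gx X)) : Prop :=
  IsLandL w ∧ w.head? = some Gx.gone ∧ w.getLast? = some Gx.gone ∧ RiverFreeL w

/-- The set `M¹(X)` of all mountains. -/
def MSet (X : Type) : Set (List (Gx X)) := {w | IsMountainL w}

/-- `u * v`: concatenation merging the repeated junction letter. -/
def mergeL (u v : List (Gx X)) : List (Gx X) := u ++ v.tail

open Classical in
/-- The maximal initial uphill `λ_l` of a landscape. -/
noncomputable def maxUp : List (Gx X) → List (Gx X)
  | a :: b :: t => if Gx.stepUp a b then a :: maxUp (b :: t) else [a]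
  | w => w

/-- The maximal final downhill `λ_r` of a landscape. -/
noncomputable def lamRL (w : List (Gx X)) : List (Gx X) := (maxUp w.reverse).reverse

/-- The peak `κ` of a mountain. -/
noncomputable def peakL (w : List (Gx X)) : Gx X := (maxUp w).getLast?.getD Gx.gone

/-- `β₁` on a letter: the mountain `λ_l(g) * λ_r(g)`. -/
def beta1g (g : Gx X) : List (Gx X) := mergeL (Gx.lamL g) (Gx.lamR g)

/-- `β₁` on a word: `β₁(g₀) * ⋯ * β₁(g_n)`. -/
def beta1L : List (Gx X) → List (Gx X)
  | [] => []
  | [g] => beta1g g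
  | g :: t => mergeL (beta1g g) (beta1L t)

/-- One uplifting of a river. -/
def UpStep (u v : List (Gx X)) : Prop :=
  ∃ (p s : List (Gx X)) (a b c : Gx X),
    u = p ++ a :: b :: c :: s ∧ a.ht = b.ht + 1 ∧ c.ht = b.ht + 1 ∧
    ((a = c ∧ v = p ++ a :: s) ∨
     (a ≠ c ∧ ∃ d : Gx X, d.1 = PreG.node c.1 b.1 a.1 ∧ v = p ++ a :: d :: c :: s))

/-- The reflexive and transitive closure `→*` of uplifting of rivers. -/
def UpStar : List (Gx X) → List (Gx X) → Prop := Relation.ReflTransGen UpStep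

open Classical in
/-- `β₂(u)`: the unique landscape with no rivers reachable from `u` by
upliftings of rivers. -/
noncomputable def beta2L (u : List (Gx X)) : List (Gx X) :=
  if h : ∃ v, UpStar u v ∧ RiverFreeL v ∧ IsLandL v then h.choose else u

/-- `β(u) = β₂(β₁(u))`. -/
noncomputable def betaL (u : List (Gx X)) : List (Gx X) := beta2L (beta1L u)

/-- The operation `⊙` on mountains: `u ⊙ v = β₂(u * v)`. -/
noncomputable def odotL (u v : List (Gx X)) : List (Gx X) := beta2L (mergeL u v)

/-- Valleys: a downhill followed by an uphill (junction merged). -/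
def IsValleyL (w : List (Gx X)) : Prop :=
  ∃ d u : List (Gx X), IsDownhillL d ∧ IsUphillL u ∧ d.getLast? = u.head? ∧
    w = mergeL d u

/-- Canyons: valleys with equal endpoints. -/
def IsCanyonL (w : List (Gx X)) : Prop := IsValleyL w ∧ w.head? = w.getLast?

/-- Gorges: canyons `w` with `w →* σ(w)`. -/
def IsGorgeL (w : List (Gx X)) : Prop :=
  IsCanyonL w ∧ ∃ a, w.head? = some a ∧ UpStar w [a]

end Landscapes

section Green

variable {X : Type}

/-- `a ≤_R b`. -/
def leR (a b : FT1 X) : Prop := ∃ m, a = b * m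

/-- `a ≤_L b`. -/
def leL (a b : FT1 X) : Prop := ∃ m, a = m * b

/-- `a ≤_J b`. -/
def leJ (a b : FT1 X) : Prop := ∃ m n, a = m * b * n

/-- The right ideal `aM`. -/
def rSet (a : FT1 X) : Set (FT1 X) := {x | ∃ m, x = a * m}

/-- The left ideal `Ma`. -/
def lSet (a : FT1 X) : Set (FT1 X) := {x | ∃ m, x = m * a}

/-- The two-sided ideal `MaM`. -/
def jSet (a : FT1 X) : Set (FT1 X) := {x | ∃ m n, x = m * a * n}

/-- Green's relation `R`. -/
def GreenR (a b : FT1 X) : Prop := rSet a = rSet b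

/-- Green's relation `L`. -/
def GreenL (a b : FT1 X) : Prop := lSet a = lSet b

/-- Green's relation `J`. -/
def GreenJ (a b : FT1 X) : Prop := jSet a = jSet b

/-- Green's relation `H = L ∩ R`. -/
def GreenH (a b : FT1 X) : Prop := GreenR a b ∧ GreenL a b

/-- Green's relation `D = L ∨ R` (join as equivalence relations). -/
def GreenD : FT1 X → FT1 X → Prop :=
  Relation.EqvGen (fun a b => GreenL a b ∨ GreenR a b)

/-- The natural partial order on a regular semigroup: `s ≤ t` iff
`s = et = tf` for some idempotents `e`, `f`. -/
def natLe (s t : FT1 X) : Prop :=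
  ∃ e f : FT1 X, e * e = e ∧ f * f = f ∧ s = e * t ∧ s = t * f

end Green

/-- The sandwich set `S(e, f)`. -/
def sandwich {S : Type*} [Mul S] (e f : S) : Set S :=
  {h | h * h = h ∧ f * h = h ∧ h * e = h ∧ e * h * f = e * f}

/-- Skeleton mappings `φ : G(X) → E(S¹)`. -/
def IsSkeletonMap {X : Type} {S : Type} [Semigroup S] (φ : Gx X → WithOne S) : Prop :=
  (Function.Injective fun x : X => φ (Gx.ofX x)) ∧
  (∀ x : X, ∃ s : S, s * s = s ∧ φ (Gx.ofX x) = (s : WithOne S)) ∧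
  (∀ g : Gx X, φ g * φ g = φ g) ∧
  (∀ g : Gx X, g.ht = 1 → φ Gx.gone * φ g = φ g ∧ φ g * φ Gx.gone = φ g) ∧
  (∀ g : Gx X, 2 ≤ g.ht → φ g ∈ sandwich (φ g.r * φ g.c) (φ g.c * φ g.l))

/-!
If `h ∈ {g^l, g^r}` then `[g][h][g] = [g]`: for `⋏(g) ≥ 2` this follows from
`[g^c g^l g] = [g]` and `[g g^r g^c] = [g]`, which give `[g] = [g g^r g^c g^l g]`. Hence the class
of a downhill times the class of its reverse collapses to the first letter, and the reverse of an
uphill times the uphill to the last letter `p`, so for a landscape `w = u * d` with peak `p`,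
`[w][rev w][w] = [u][p][p][d] = [w]`.

Every element is the class of such a landscape. A word is first turned into a landscape through
the letter `1`, since each `[g]` is the class of a mountain `λ_l(g) * λ_r(g)`. A landscape is then
straightened from the right: when a down step `a b` meets an uphill `b c ⋯`, either `a = c` and
`[a b a] = [a]`, or the river `a b c` is uplifted to the hill `a d c` with `d = (c, b, a)`, which
the third relation of `ρ_s` shows does not change the class; the uplift moves the problem one
letter further up the uphill.
-/

section Semigroup

variable {S : Type*} [Semigroup S]

theorem mul_mul_eq_self_of_absorb {g c l r : S} (hg : g * g = g) (hc : c * c = c)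
    (hl : c * l * g = g) (hr : g * r * c = g) : g * l * g = g ∧ g * r * g = g := by
  have hlg : g * l * g = g :=
    calc g * l * g = g * r * (c * c) * l * g := by rw [hc, hr]
      _ = (g * r * c) * (c * l * g) := by simp only [mul_assoc]
      _ = g := by rw [hl, hr, hg]
  refine ⟨hlg, ?_⟩
  calc g * r * g = g * r * (c * l * g) := by rw [hl]
    _ = (g * r * c) * l * g := by simp only [mul_assoc]
    _ = g := by rw [hr, hlg]

theorem mul_mul_eq_of_uplift {a b c d : S} (hb : b * b = b) (hl : b * c * d = d)
    (hr : d * a * b = d) (hs : a * b * d * b * c = a * b * c) :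
    a * d * c = a * b * c := by
  have had : a * d = a * b * d :=
    calc a * d = a * (b * c * d) := by rw [hl]
      _ = a * (b * b) * c * d := by rw [hb]; simp only [mul_assoc]
      _ = a * b * (b * c * d) := by simp only [mul_assoc]
      _ = a * b * d := by rw [hl]
  have hdc : d * c = d * b * c :=
    calc d * c = d * a * b * c := by rw [hr]
      _ = d * a * (b * b) * c := by rw [hb]
      _ = (d * a * b) * b * c := by simp only [mul_assoc]
      _ = d * b * c := by rw [hr]
  calc a * d * c = (a * d) * b * c := by rw [mul_assoc, hdc, ← mul_assoc, ← mul_assoc]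
    _ = a * b * c := by rw [had, hs]

end Semigroup

namespace Gx

variable {X : Type}

theorem eq_gone_of_ht_eq_zero {g : Gx X} (h : g.ht = 0) : g = gone := by
  obtain ⟨_, hg⟩ := g
  cases hg with
  | one => rfl
  | base => simp [ht, PreG.ht] at h
  | node => simp [ht, PreG.ht] at h

theorem l_eq_gone_and_r_eq_gone {g : Gx X} (h : g.ht ≤ 1) : g.l = gone ∧ g.r = gone := by
  obtain ⟨_, hg⟩ := g
  cases hg with
  | one | base => exact ⟨rfl, rfl⟩
  | node _ _ _ hl => simp only [ht, PreG.ht] at h; omega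

theorem ht_l_add_one {g : Gx X} (h : 1 ≤ g.ht) : g.l.ht + 1 = g.ht := by
  obtain ⟨_, hg⟩ := g
  cases hg with
  | one => simp [ht, PreG.ht] at h
  | base | node => rfl

theorem ht_r_add_one {g : Gx X} (h : 1 ≤ g.ht) : g.r.ht + 1 = g.ht := by
  obtain ⟨_, hg⟩ := g
  cases hg with
  | one => simp [ht, PreG.ht] at h
  | base => rfl
  | node _ _ _ _ hlr => simp only [ht, r, PreG.right, PreG.ht]; omega

theorem ht_c_add_two {g : Gx X} (h : 2 ≤ g.ht) : g.c.ht + 2 = g.ht := by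
  obtain ⟨_, hg⟩ := g
  cases hg with
  | one | base => simp [ht, PreG.ht] at h
  | node _ _ _ _ _ hcl => simp only [ht, c, PreG.center, PreG.ht]; omega

theorem stepUp_c_l {g : Gx X} (h : 2 ≤ g.ht) : stepUp g.c g.l := by
  obtain ⟨_, hg⟩ := g
  cases hg with
  | one | base => simp [ht, PreG.ht] at h
  | node _ _ _ _ _ _ _ hcl =>
    rcases hcl with hcl | hcl <;> [left; right] <;> exact Subtype.ext hcl

theorem stepUp_c_r {g : Gx X} (h : 2 ≤ g.ht) : stepUp g.c g.r := by
  obtain ⟨_, hg⟩ := g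
  cases hg with
  | one | base => simp [ht, PreG.ht] at h
  | node _ _ _ _ _ _ _ _ hcr =>
    rcases hcr with hcr | hcr <;> [left; right] <;> exact Subtype.ext hcr

/-- The height condition excludes the step from `1` to `1 = 1^l`. -/
def IsChild (a b : Gx X) : Prop := stepUp a b ∧ b.ht = a.ht + 1

/-- Consecutive letters of a landscape. -/
def Adj (a b : Gx X) : Prop := a.IsChild b ∨ b.IsChild a

theorem isChild_l {g : Gx X} (h : 1 ≤ g.ht) : g.l.IsChild g :=
  ⟨Or.inl rfl, (ht_l_add_one h).symm⟩

theorem isChild_r {g : Gx X} (h : 1 ≤ g.ht) : g.r.IsChild g :=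
  ⟨Or.inr rfl, (ht_r_add_one h).symm⟩

theorem isChild_c_l {g : Gx X} (h : 2 ≤ g.ht) : g.c.IsChild g.l :=
  ⟨stepUp_c_l h, by have := ht_c_add_two h; have := ht_l_add_one (g := g) (by omega); omega⟩

theorem isChild_c_r {g : Gx X} (h : 2 ≤ g.ht) : g.c.IsChild g.r :=
  ⟨stepUp_c_r h, by have := ht_c_add_two h; have := ht_r_add_one (g := g) (by omega); omega⟩

theorem exists_node {a b c : Gx X} (ha : b.IsChild a) (hc : b.IsChild c) (hne : a ≠ c) :
    ∃ d : Gx X, d.l = c ∧ d.c = b ∧ d.r = a ∧ 2 ≤ d.ht := by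
  obtain ⟨hba, hta⟩ := ha
  obtain ⟨hbc, htc⟩ := hc
  have hd : (PreG.node c.1 b.1 a.1).IsG := by
    refine .node c.2 b.2 a.2 ?_ ?_ ?_ (fun h => hne (Subtype.ext h).symm) ?_ ?_
    · show 1 ≤ c.ht; omega
    · show c.ht = a.ht; omega
    · show b.ht + 1 = c.ht; omega
    · exact hbc.imp (congrArg Subtype.val) (congrArg Subtype.val)
    · exact hba.imp (congrArg Subtype.val) (congrArg Subtype.val)
  exact ⟨⟨_, hd⟩, rfl, rfl, rfl, show c.ht + 1 ≥ 2 by omega⟩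

end Gx

section Lists

variable {X : Type}

theorem isChain_mergeL {R : Gx X → Gx X → Prop} {u d : List (Gx X)} (hu : u.IsChain R)
    (hd : d.IsChain R) (hj : u.getLast? = d.head?) : (mergeL u d).IsChain R := by
  obtain _ | ⟨p, d⟩ := d
  · simpa [mergeL] using hu
  refine hu.append hd.tail fun x hx y hy => ?_
  obtain rfl : p = x := by simpa [hj] using hx
  exact (List.isChain_cons.mp hd).1 y hy

theorem getLast?_mergeL {u d : List (Gx X)} (hd : d ≠ []) (hj : u.getLast? = d.head?) :
    (mergeL u d).getLast? = d.getLast? := by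
  obtain _ | ⟨p, _ | ⟨q, d⟩⟩ := d
  · exact absurd rfl hd
  · simpa [mergeL] using hj
  · simp only [mergeL, List.tail_cons]
    rw [List.getLast?_append_of_ne_nil _ (List.cons_ne_nil q d), List.getLast?_cons_cons]

theorem reverse_mergeL {u d : List (Gx X)} (hu : u ≠ []) (hd : d ≠ [])
    (hj : u.getLast? = d.head?) : (mergeL u d).reverse = mergeL d.reverse u.reverse := by
  obtain rfl | ⟨u, p, rfl⟩ := u.eq_nil_or_concat'
  · exact absurd rfl hu
  obtain _ | ⟨q, d⟩ := d
  · exact absurd rfl hd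
  obtain rfl : p = q := by simpa using hj
  simp [mergeL]

theorem IsUphillL.reverse {u : List (Gx X)} (h : IsUphillL u) : IsDownhillL u.reverse :=
  ⟨List.reverse_ne_nil_iff.mpr h.1, List.isChain_reverse.mpr h.2⟩

theorem IsDownhillL.reverse {d : List (Gx X)} (h : IsDownhillL d) : IsUphillL d.reverse :=
  ⟨List.reverse_ne_nil_iff.mpr h.1, List.isChain_reverse.mpr h.2⟩

end Lists

namespace FT1

variable {X : Type}

open Gx

abbrev gen (g : Gx X) : FT1 X := cls (Wd.og g)

theorem cls_eq_of_rhoBase {u v : Wd X} (h : rhoBase X u v) : cls u = cls v :=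
  (Con.eq _).mpr (ConGen.Rel.of u v h)

theorem gen_mul_self (g : Gx X) : gen g * gen g = gen g :=
  cls_eq_of_rhoBase (.inl ⟨g, .inr (.inr ⟨rfl, rfl⟩)⟩)

theorem gen_gone_mul_gen (g : Gx X) : gen gone * gen g = gen g :=
  cls_eq_of_rhoBase (.inl ⟨g, .inl ⟨rfl, rfl⟩⟩)

theorem gen_mul_gen_gone (g : Gx X) : gen g * gen gone = gen g :=
  cls_eq_of_rhoBase (.inl ⟨g, .inr (.inl ⟨rfl, rfl⟩)⟩)

theorem gen_c_mul_gen_l_mul_gen {g : Gx X} (h : 2 ≤ g.ht) :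
    gen g.c * gen g.l * gen g = gen g :=
  cls_eq_of_rhoBase (.inr ⟨g, h, .inl ⟨rfl, rfl⟩⟩)

theorem gen_mul_gen_r_mul_gen_c {g : Gx X} (h : 2 ≤ g.ht) :
    gen g * gen g.r * gen g.c = gen g :=
  cls_eq_of_rhoBase (.inr ⟨g, h, .inr (.inl ⟨rfl, rfl⟩)⟩)

theorem gen_gone_mul (x : FT1 X) : gen gone * x = x := by
  induction x using Con.induction_on with | H u => ?_
  induction u using FreeSemigroup.recOnMul with
  | ih1 g => exact gen_gone_mul_gen g
  | ih2 g v hg => exact (mul_assoc _ _ (cls v)).symm.trans (congrArg (· * cls v) hg)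

theorem mul_gen_gone (x : FT1 X) : x * gen gone = x := by
  induction x using Con.induction_on with | H u => ?_
  induction u using FreeSemigroup.recOnMul with
  | ih1 g => exact gen_mul_gen_gone g
  | ih2 g v _ hv => exact (mul_assoc (gen g) (cls v) _).trans (congrArg (gen g * ·) hv)

theorem closure_range_gen : Subsemigroup.closure (Set.range (gen (X := X))) = ⊤ := by
  refine (Subsemigroup.eq_top_iff' _).mpr fun x => ?_
  induction x using Con.induction_on with | H u => ?_
  induction u using FreeSemigroup.recOnMul with
  | ih1 g => exact Subsemigroup.subset_closure ⟨g, rfl⟩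
  | ih2 g _ _ hv =>
    exact Subsemigroup.mul_mem _ (Subsemigroup.subset_closure (Set.mem_range_self g)) hv

theorem gen_mul_gen_mul_gen_of_stepUp {a b : Gx X} (h : stepUp b a) :
    gen a * gen b * gen a = gen a := by
  by_cases ha : 2 ≤ a.ht
  · have key := mul_mul_eq_self_of_absorb (gen_mul_self a) (gen_mul_self a.c)
      (gen_c_mul_gen_l_mul_gen ha) (gen_mul_gen_r_mul_gen_c ha)
    rcases h with rfl | rfl
    exacts [key.1, key.2]
  · obtain ⟨hl, hr⟩ := l_eq_gone_and_r_eq_gone (g := a) (by omega)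
    obtain rfl : b = gone := by rcases h with rfl | rfl; exacts [hl, hr]
    rw [gen_mul_gen_gone, gen_mul_self]

theorem exists_uplift {a b c : Gx X} (ha : b.IsChild a) (hc : b.IsChild c) (hne : a ≠ c) :
    ∃ d : Gx X, a.IsChild d ∧ c.IsChild d ∧
      gen a * gen d * gen c = gen a * gen b * gen c := by
  obtain ⟨d, rfl, rfl, rfl, hd⟩ := exists_node ha hc hne
  refine ⟨d, isChild_r (by omega), isChild_l (by omega), mul_mul_eq_of_uplift (gen_mul_self _)
    (gen_c_mul_gen_l_mul_gen hd) (gen_mul_gen_r_mul_gen_c hd) ?_⟩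
  exact cls_eq_of_rhoBase (.inr ⟨d, hd, .inr (.inr ⟨rfl, rfl⟩)⟩)

/-- `Wd.ofL []` is a junk word, so the lemmas below assume nonempty lists. -/
abbrev ofList (w : List (Gx X)) : FT1 X := cls (Wd.ofL w)

theorem ofList_cons_cons (a b : Gx X) (t : List (Gx X)) :
    ofList (a :: b :: t) = gen a * ofList (b :: t) := rfl

theorem ofList_append {u v : List (Gx X)} (hu : u ≠ []) (hv : v ≠ []) :
    ofList (u ++ v) = ofList u * ofList v := by
  obtain _ | ⟨a, u⟩ := u
  · exact absurd rfl hu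
  obtain _ | ⟨b, v⟩ := v
  · exact absurd rfl hv
  rfl

theorem ofList_append_eq_of_eq {u v : List (Gx X)} (hu : u ≠ []) (hv : v ≠ [])
    (h : ofList u = ofList v) (s : List (Gx X)) : ofList (u ++ s) = ofList (v ++ s) := by
  obtain _ | ⟨a, s⟩ := s
  · simpa using h
  rw [ofList_append hu (List.cons_ne_nil a s), ofList_append hv (List.cons_ne_nil a s), h]

theorem ofList_mul_gen_of_getLast? {u : List (Gx X)} {p : Gx X} (h : u.getLast? = some p) :
    ofList u * gen p = ofList u := by
  obtain rfl | ⟨u, q, rfl⟩ := u.eq_nil_or_concat'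
  · simp at h
  obtain rfl : q = p := by simpa using h
  obtain rfl | hu := eq_or_ne u []
  · exact gen_mul_self q
  rw [ofList_append hu (List.cons_ne_nil q []), mul_assoc]
  exact congrArg (ofList u * ·) (gen_mul_self q)

theorem ofList_mergeL {u d : List (Gx X)} (hu : u ≠ []) (hd : d ≠ [])
    (hj : u.getLast? = d.head?) : ofList (mergeL u d) = ofList u * ofList d := by
  obtain _ | ⟨p, _ | ⟨q, d⟩⟩ := d
  · exact absurd rfl hd
  · show ofList (u ++ []) = ofList u * gen p
    rw [List.append_nil, ofList_mul_gen_of_getLast? hj]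
  · rw [mergeL, List.tail_cons, ofList_append hu (List.cons_ne_nil q d), ofList_cons_cons,
      ← mul_assoc, ofList_mul_gen_of_getLast? hj]

theorem ofList_mul_ofList_reverse_of_isChain_stepDown {b : Gx X} {t : List (Gx X)}
    (h : (b :: t).IsChain stepDown) : ofList (b :: t) * ofList (b :: t).reverse = gen b := by
  induction t generalizing b with
  | nil => exact gen_mul_self b
  | cons c t ih =>
    obtain ⟨hbc, h⟩ := List.isChain_cons_cons.mp h
    rw [List.reverse_cons, ofList_append (by simp) (List.cons_ne_nil b []), ofList_cons_cons]
    calc gen b * ofList (c :: t) * (ofList (c :: t).reverse * gen b)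
        = gen b * (ofList (c :: t) * ofList (c :: t).reverse) * gen b := by
          simp only [mul_assoc]
      _ = gen b := by rw [ih h, gen_mul_gen_mul_gen_of_stepUp hbc]

theorem ofList_reverse_mul_ofList_of_isChain_stepUp {u : List (Gx X)} {p : Gx X}
    (h : u.IsChain stepUp) (hp : u.getLast? = some p) : ofList u.reverse * ofList u = gen p := by
  obtain rfl | ⟨u, q, rfl⟩ := u.eq_nil_or_concat'
  · simp at hp
  obtain rfl : q = p := by simpa using hp
  have hdown : (u ++ [q]).reverse.IsChain stepDown := List.isChain_reverse.mpr h
  rw [List.reverse_concat'] at hdown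
  simpa using ofList_mul_ofList_reverse_of_isChain_stepDown hdown

theorem ofList_mergeL_mul_reverse_mul {u d : List (Gx X)} (hu : IsUphillL u)
    (hd : IsDownhillL d) (hj : u.getLast? = d.head?) :
    ofList (mergeL u d) * ofList (mergeL u d).reverse * ofList (mergeL u d) =
      ofList (mergeL u d) := by
  obtain _ | ⟨p, d'⟩ := d
  · exact absurd rfl hd.1
  have hp : u.getLast? = some p := hj
  have hj' : (p :: d').reverse.getLast? = u.reverse.head? := by simpa using hj.symm
  rw [reverse_mergeL hu.1 hd.1 hj, ofList_mergeL hu.1 hd.1 hj,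
    ofList_mergeL hd.reverse.1 hu.reverse.1 hj']
  calc ofList u * ofList (p :: d') * (ofList (p :: d').reverse * ofList u.reverse) *
        (ofList u * ofList (p :: d'))
      = ofList u * (ofList (p :: d') * ofList (p :: d').reverse) *
          (ofList u.reverse * ofList u) * ofList (p :: d') := by simp only [mul_assoc]
    _ = ofList u * ofList (p :: d') := by
      rw [ofList_mul_ofList_reverse_of_isChain_stepDown hd.2,
        ofList_reverse_mul_ofList_of_isChain_stepUp hu.2 hp, ofList_mul_gen_of_getLast? hp,
        ofList_mul_gen_of_getLast? hp]

theorem ofList_reverse_mergeL_mul_mul_reverse {u d : List (Gx X)} (hu : IsUphillL u)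
    (hd : IsDownhillL d) (hj : u.getLast? = d.head?) :
    ofList (mergeL u d).reverse * ofList (mergeL u d) * ofList (mergeL u d).reverse =
      ofList (mergeL u d).reverse := by
  have hj' : d.reverse.getLast? = u.reverse.head? := by simpa using hj.symm
  have := ofList_mergeL_mul_reverse_mul hd.reverse hu.reverse hj'
  rwa [← reverse_mergeL hu.1 hd.1 hj, List.reverse_reverse] at this

end FT1

section Landscapes

variable {X : Type}

open Gx FT1

inductive IsUpDown : List (Gx X) → Prop
  | downhill {d : List (Gx X)} : d ≠ [] → d.IsChain (fun a b => b.IsChild a) → IsUpDown d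
  | cons {a b : Gx X} {t : List (Gx X)} :
      a.IsChild b → IsUpDown (b :: t) → IsUpDown (a :: b :: t)

theorem IsUpDown.exists_mergeL {w : List (Gx X)} (h : IsUpDown w) :
    ∃ u d, IsUphillL u ∧ IsDownhillL d ∧ u.getLast? = d.head? ∧ u.head? = w.head? ∧
      w = mergeL u d := by
  induction h with
  | @downhill d hd hchain =>
    obtain _ | ⟨p, d⟩ := d
    · exact absurd rfl hd
    exact ⟨[p], p :: d, ⟨List.cons_ne_nil p [], .singleton p⟩,
      ⟨hd, hchain.imp fun _ _ h => h.1⟩, rfl, rfl, rfl⟩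
  | @cons a b t hab _ ih =>
    obtain ⟨u, d, hu, hd, hj, hhead, hw⟩ := ih
    obtain _ | ⟨b', u⟩ := u
    · exact absurd rfl hu.1
    obtain rfl : b' = b := by simpa using hhead
    refine ⟨a :: b' :: u, d,
      ⟨List.cons_ne_nil _ _, List.isChain_cons_cons.mpr ⟨hab.1, hu.2⟩⟩,
      hd, by simpa using hj, rfl, by rw [hw]; rfl⟩

theorem IsUpDown.exists_cons_of_isChild {a b : Gx X} {t : List (Gx X)} (hba : b.IsChild a)
    (h : IsUpDown (b :: t)) :
    ∃ t', IsUpDown (a :: t') ∧ ofList (a :: t') = ofList (a :: b :: t) := by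
  induction t generalizing a b with
  | nil => exact ⟨[b], .downhill (List.cons_ne_nil _ _) (List.isChain_pair.mpr hba), rfl⟩
  | cons c t ih =>
    rcases h with ⟨-, hdown⟩ | ⟨hbc, hc⟩
    · exact ⟨b :: c :: t,
        .downhill (List.cons_ne_nil _ _) (List.isChain_cons_cons.mpr ⟨hba, hdown⟩), rfl⟩
    obtain rfl | hac := eq_or_ne a c
    · refine ⟨t, hc, ofList_append_eq_of_eq (u := [a]) (v := [a, b, a]) (List.cons_ne_nil _ _)
        (List.cons_ne_nil _ _) ?_ t⟩
      show gen a = gen a * (gen b * gen a)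
      rw [← mul_assoc, gen_mul_gen_mul_gen_of_stepUp hba.1]
    obtain ⟨d, had, hcd, hriver⟩ := exists_uplift hba hbc hac
    obtain ⟨t', ht', hcls⟩ := ih hcd hc
    refine ⟨d :: t', .cons had ht', ?_⟩
    rw [ofList_cons_cons, hcls, ← ofList_cons_cons]
    refine ofList_append_eq_of_eq (u := [a, d, c]) (v := [a, b, c]) (List.cons_ne_nil _ _)
      (List.cons_ne_nil _ _) ?_ t
    show gen a * (gen d * gen c) = gen a * (gen b * gen c)
    simpa only [mul_assoc] using hriver

theorem exists_isUpDown_of_isChain_adj {a : Gx X} {t : List (Gx X)}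
    (h : (a :: t).IsChain Adj) :
    ∃ t', IsUpDown (a :: t') ∧ ofList (a :: t') = ofList (a :: t) := by
  induction t generalizing a with
  | nil => exact ⟨[], .downhill (List.cons_ne_nil _ _) (.singleton a), rfl⟩
  | cons b t ih =>
    obtain ⟨hab, h⟩ := List.isChain_cons_cons.mp h
    obtain ⟨t', ht', hcls⟩ := ih h
    rcases hab with hab | hba
    · exact ⟨b :: t', .cons hab ht', by rw [ofList_cons_cons, hcls, ofList_cons_cons]⟩
    obtain ⟨t'', ht'', hcls'⟩ := ht'.exists_cons_of_isChild hba
    exact ⟨t'', ht'', by rw [hcls', ofList_cons_cons, hcls, ofList_cons_cons]⟩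

theorem exists_uphill_from_gone (g : Gx X) :
    ∃ t, (gone :: t).IsChain IsChild ∧ (gone :: t).getLast? = some g ∧
      ofList (gone :: t) = gen g := by
  induction hg : g.ht using Nat.strong_induction_on generalizing g with | _ n ih => ?_
  subst hg
  rcases lt_or_ge g.ht 2 with h | h
  · obtain h0 | h1 : g.ht = 0 ∨ g.ht = 1 := by omega
    · obtain rfl := eq_gone_of_ht_eq_zero h0
      exact ⟨[], .singleton _, rfl, rfl⟩
    · refine ⟨[g], List.isChain_pair.mpr ?_, rfl, gen_gone_mul_gen g⟩
      exact ⟨Or.inl (l_eq_gone_and_r_eq_gone h1.le).1.symm, h1⟩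
  obtain ⟨t, hchain, hlast, hcls⟩ := ih g.c.ht (by have := ht_c_add_two h; omega) g.c rfl
  refine ⟨t ++ [g.l, g], ?_, by simp [List.getLast?_cons], ?_⟩
  · refine List.IsChain.append (l₁ := gone :: t) hchain
      (List.isChain_pair.mpr (isChild_l (by omega))) ?_
    rw [hlast]
    simpa using isChild_c_l h
  · rw [← List.cons_append, ofList_append (List.cons_ne_nil _ _) (List.cons_ne_nil _ _), hcls,
      ofList_cons_cons, ← mul_assoc]
    exact gen_c_mul_gen_l_mul_gen h

theorem exists_downhill_to_gone (g : Gx X) :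
    ∃ t, (g :: t).IsChain (fun a b => b.IsChild a) ∧ (g :: t).getLast? = some gone ∧
      ofList (g :: t) = gen g := by
  induction hg : g.ht using Nat.strong_induction_on generalizing g with | _ n ih => ?_
  subst hg
  rcases lt_or_ge g.ht 2 with h | h
  · obtain h0 | h1 : g.ht = 0 ∨ g.ht = 1 := by omega
    · obtain rfl := eq_gone_of_ht_eq_zero h0
      exact ⟨[], .singleton _, rfl, rfl⟩
    · refine ⟨[gone], List.isChain_pair.mpr ?_, rfl, gen_mul_gen_gone g⟩
      exact ⟨Or.inr (l_eq_gone_and_r_eq_gone h1.le).2.symm, h1⟩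
  obtain ⟨t, hchain, hlast, hcls⟩ := ih g.c.ht (by have := ht_c_add_two h; omega) g.c rfl
  refine ⟨g.r :: g.c :: t, ?_, by rwa [List.getLast?_cons_cons, List.getLast?_cons_cons], ?_⟩
  · exact List.isChain_cons_cons.mpr
      ⟨isChild_r (by omega), List.isChain_cons_cons.mpr ⟨isChild_c_r h, hchain⟩⟩
  · rw [ofList_cons_cons, ofList_cons_cons, hcls, ← mul_assoc, gen_mul_gen_r_mul_gen_c h]

theorem exists_landscape_from_gone (x : Wd X) :
    ∃ t, (gone :: t).IsChain Adj ∧ (gone :: t).getLast? = some gone ∧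
      ofList (gone :: t) = cls x := by
  induction x using FreeSemigroup.recOnMul with
  | ih1 g =>
    obtain ⟨t₁, hc₁, hl₁, hcls₁⟩ := exists_uphill_from_gone g
    obtain ⟨t₂, hc₂, hl₂, hcls₂⟩ := exists_downhill_to_gone g
    have hj : (gone :: t₁).getLast? = (g :: t₂).head? := hl₁
    refine ⟨t₁ ++ t₂,
      isChain_mergeL (hc₁.imp fun _ _ => .inl) (hc₂.imp fun _ _ => .inr) hj,
      (getLast?_mergeL (List.cons_ne_nil _ _) hj).trans hl₂, ?_⟩
    refine (ofList_mergeL (List.cons_ne_nil _ _) (List.cons_ne_nil _ _) hj).trans ?_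
    rw [hcls₁, hcls₂, gen_mul_self]
    rfl
  | ih2 g v hg hv =>
    obtain ⟨t₁, hc₁, hl₁, hcls₁⟩ := hg
    obtain ⟨t₂, hc₂, hl₂, hcls₂⟩ := hv
    have hj : (gone :: t₁).getLast? = (gone :: t₂).head? := hl₁
    refine ⟨t₁ ++ t₂, isChain_mergeL hc₁ hc₂ hj,
      (getLast?_mergeL (List.cons_ne_nil _ _) hj).trans hl₂, ?_⟩
    refine (ofList_mergeL (List.cons_ne_nil _ _) (List.cons_ne_nil _ _) hj).trans ?_
    rw [hcls₁, hcls₂]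
    rfl

theorem FT1.exists_ofList_mergeL_eq (x : FT1 X) :
    ∃ u d, IsUphillL u ∧ IsDownhillL d ∧ u.getLast? = d.head? ∧
      ofList (mergeL u d) = x := by
  induction x using Con.induction_on with | H w => ?_
  obtain ⟨t, hchain, -, hcls⟩ := exists_landscape_from_gone w
  obtain ⟨t', hud, hcls'⟩ := exists_isUpDown_of_isChain_adj hchain
  obtain ⟨u, d, hu, hd, hj, -, hw⟩ := hud.exists_mergeL
  exact ⟨u, d, hu, hd, hj, by rw [← hw, hcls', hcls]; rfl⟩

end Landscapes

theorem statement3_general {X : Type} :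
    (∀ g : Gx X, cls (Wd.og g) * cls (Wd.og g) = cls (Wd.og g)) ∧
    (∀ a : FT1 X, cls (Wd.og Gx.gone) * a = a ∧ a * cls (Wd.og Gx.gone) = a) ∧
    Subsemigroup.closure (Set.range fun g : Gx X => cls (Wd.og g)) = (⊤ : Subsemigroup (FT1 X)) ∧
    (∀ a : FT1 X, ∃ b : FT1 X, a * b * a = a ∧ b * a * b = b) ∧
    (∀ u d : List (Gx X), IsUphillL u → IsDownhillL d → u.getLast? = d.head? →
      cls (Wd.ofL (mergeL u d)) * cls (Wd.ofL (mergeL u d).reverse) * cls (Wd.ofL (mergeL u d)) =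
        cls (Wd.ofL (mergeL u d)) ∧
      cls (Wd.ofL (mergeL u d).reverse) * cls (Wd.ofL (mergeL u d)) *
          cls (Wd.ofL (mergeL u d).reverse) =
        cls (Wd.ofL (mergeL u d).reverse)) := by
  have inverse (u d : List (Gx X)) (hu : IsUphillL u) (hd : IsDownhillL d)
      (hj : u.getLast? = d.head?) :=
    And.intro (FT1.ofList_mergeL_mul_reverse_mul hu hd hj)
      (FT1.ofList_reverse_mergeL_mul_mul_reverse hu hd hj)
  refine ⟨FT1.gen_mul_self, fun a => ⟨FT1.gen_gone_mul a, FT1.mul_gen_gone a⟩,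
    FT1.closure_range_gen, fun a => ?_, inverse⟩
  obtain ⟨u, d, hu, hd, hj, rfl⟩ := FT1.exists_ofList_mergeL_eq a
  exact ⟨_, inverse u d hu hd hj⟩

theorem statement3 {X : Type} [Nonempty X] :
    (∀ g : Gx X, cls (Wd.og g) * cls (Wd.og g) = cls (Wd.og g)) ∧
    (∀ a : FT1 X, cls (Wd.og Gx.gone) * a = a ∧ a * cls (Wd.og Gx.gone) = a) ∧
    Subsemigroup.closure (Set.range fun g : Gx X => cls (Wd.og g)) = (⊤ : Subsemigroup (FT1 X)) ∧
    (∀ a : FT1 X, ∃ b : FT1 X, a * b * a = a ∧ b * a * b = b) ∧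
    (∀ u d : List (Gx X), IsUphillL u → IsDownhillL d → u.getLast? = d.head? →
      cls (Wd.ofL (mergeL u d)) * cls (Wd.ofL (mergeL u d).reverse) * cls (Wd.ofL (mergeL u d)) =
        cls (Wd.ofL (mergeL u d)) ∧
      cls (Wd.ofL (mergeL u d).reverse) * cls (Wd.ofL (mergeL u d)) *
          cls (Wd.ofL (mergeL u d).reverse) =
        cls (Wd.ofL (mergeL u d).reverse)) :=
  statement3_general
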